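/- For every δ > 0 and every real u, the limits lim_{v→+∞} θ(u + iv|δ) = −2δ and lim_{v→−∞} θ(u + iv|δ) = 2δ hold. -/

import Mathlib

/-- The kernel `K(x|δ) = (1/(2πi))·(cot(x − iδ) − cot(x + iδ))`. -/
noncomputable def Kker (δ : ℝ) (x : ℂ) : ℂ :=
  (1 / (2 * (Real.pi : ℂ) * Complex.I)) *
    (Complex.cot (x - Complex.I * δ) - Complex.cot (x + Complex.I * δ))

/-- `θ(x|δ)`: `2πi` times the integral of `K(·|δ)` along the contour running from `−π/2`
vertically to `−π/2 + i·Im x` and then horizontally to `x`. -/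
noncomputable def thetaFn (δ : ℝ) (x : ℂ) : ℂ :=
  2 * (Real.pi : ℂ) * Complex.I *
    (Complex.I * (∫ t in (0:ℝ)..x.im, Kker δ ((-(Real.pi/2) : ℝ) + Complex.I * (t : ℂ)))
      + ∫ u in (-(Real.pi/2) : ℝ)..x.re, Kker δ ((u : ℂ) + Complex.I * (x.im : ℂ)))

/-!
On the vertical line `Re x = -π/2` the cotangent becomes `cot (-π/2 + iy) = -i tanh y`, so the
kernel is real there and the vertical leg of the contour contributes
`-∫₀ᵛ (tanh (t + δ) - tanh (t - δ)) dt = -(log cosh (v + δ) - log cosh (v - δ))`, which tends to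
`∓2δ` as `v → ±∞`. On the horizontal leg, `cot z + i = 2i e^{2iz} / (e^{2iz} - 1)` is
`O(e^{-2 Im z})` uniformly in `Re z` (and `K` is even), so `K(s + iv|δ) → 0` uniformly in `s` as
`|v| → ∞` and the integral over the fixed interval `[-π/2, u]` vanishes in the limit.
-/

open Filter Topology

namespace Complex

lemma cot_neg (z : ℂ) : cot (-z) = -cot z := by
  simp [cot, div_neg]

lemma cot_neg_pi_div_two_add_I_mul (y : ℝ) :
    cot (((-(Real.pi / 2) : ℝ) : ℂ) + I * y) = -(Real.tanh y * I) := by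
  rw [show ((-(Real.pi / 2) : ℝ) : ℂ) + I * y = y * I - Real.pi / 2 by push_cast; ring,
    cot_eq_cos_div_sin, cos_sub_pi_div_two, sin_sub_pi_div_two, div_neg, ← tan_eq_sin_div_cos,
    tan_mul_I, ofReal_tanh]

lemma norm_cot_add_I_le {z : ℂ} (hz : 1 ≤ z.im) : ‖cot z + I‖ ≤ 4 * Real.exp (-2 * z.im) := by
  set w := exp (2 * I * z)
  have hw : ‖w‖ = Real.exp (-2 * z.im) := by simp [w, norm_exp, mul_re]
  have hw_le : ‖w‖ ≤ 1 / 2 := by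
    have h3 : 3 ≤ Real.exp 2 := by linarith [Real.add_one_le_exp (2 : ℝ)]
    have hexp2 : Real.exp (-2) ≤ 1 / 2 := by
      rw [Real.exp_neg]; exact inv_le_of_inv_le₀ (by norm_num) (by linarith)
    rw [hw]; exact (Real.exp_le_exp.mpr (by linarith)).trans hexp2
  have h1w : 1 / 2 ≤ ‖1 - w‖ := by
    calc 1 / 2 ≤ ‖(1 : ℂ)‖ - ‖w‖ := by rw [norm_one]; linarith
      _ ≤ ‖1 - w‖ := norm_sub_norm_le _ _
  have hw_ne : 1 - w ≠ 0 := norm_pos_iff.mp (by linarith)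
  have hcot : cot z + I = 2 * w / (I * (1 - w)) := by
    have hden : I * (1 - w) ≠ 0 := mul_ne_zero I_ne_zero hw_ne
    rw [cot_eq_exp_ratio, eq_div_iff hden, add_mul, div_mul_cancel₀ _ hden]
    linear_combination (1 - w) * I_sq
  rw [hcot, norm_div, norm_mul, norm_mul, norm_I, one_mul, div_le_iff₀ (by linarith), ← hw]
  norm_num
  nlinarith [norm_nonneg w]

end Complex

namespace Real

lemma continuous_tanh : Continuous tanh := by
  rw [show tanh = sinh / cosh from funext tanh_eq_sinh_div_cosh]
  exact continuous_sinh.div continuous_cosh fun x => (cosh_pos x).ne'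

lemma hasDerivAt_log_cosh (x : ℝ) : HasDerivAt (fun t => log (cosh t)) (tanh x) x := by
  simpa [tanh_eq_sinh_div_cosh, div_eq_inv_mul] using (hasDerivAt_cosh x).log (cosh_pos x).ne'

lemma tendsto_log_cosh_sub_self : Tendsto (fun t => log (cosh t) - t) atTop (𝓝 (-log 2)) := by
  have heq : ∀ t, log (cosh t) - t = log ((1 + exp (-(2 * t))) / 2) := fun t => by
    have h : cosh t / exp t = (1 + exp (-(2 * t))) / 2 := by
      have : exp (-(2 * t)) * exp t = exp (-t) := by rw [← exp_add]; ring_nf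
      rw [cosh_eq, div_div, div_eq_div_iff (by positivity) two_ne_zero]
      linear_combination -2 * this
    rw [← h, log_div (cosh_pos t).ne' (exp_pos t).ne', log_exp]
  have hlim : Tendsto (fun t : ℝ => (1 + exp (-(2 * t))) / 2) atTop (𝓝 (1 / 2)) := by
    simpa using ((tendsto_exp_neg_atTop_nhds_zero.comp
      (tendsto_id.const_mul_atTop two_pos)).const_add 1).div_const 2
  have hlog := (continuousAt_log (by norm_num)).tendsto.comp hlim
  rw [one_div, log_inv] at hlog
  exact hlog.congr fun t => (heq t).symm

end Real

lemma Kker_neg (δ : ℝ) (z : ℂ) : Kker δ (-z) = Kker δ z := by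
  rw [Kker, Kker, show -z - Complex.I * δ = -(z + Complex.I * δ) by ring,
    show -z + Complex.I * δ = -(z - Complex.I * δ) by ring, Complex.cot_neg, Complex.cot_neg]
  ring

lemma Kker_neg_pi_div_two_add_I_mul (δ t : ℝ) :
    Kker δ (((-(Real.pi / 2) : ℝ) : ℂ) + Complex.I * t)
      = ((Real.tanh (t + δ) - Real.tanh (t - δ)) / (2 * Real.pi) : ℝ) := by
  have hπ : (Real.pi : ℂ) ≠ 0 := Complex.ofReal_ne_zero.mpr Real.pi_ne_zero
  rw [Kker, add_sub_assoc, add_assoc, ← mul_sub, ← mul_add, ← Complex.ofReal_sub,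
    ← Complex.ofReal_add, Complex.cot_neg_pi_div_two_add_I_mul,
    Complex.cot_neg_pi_div_two_add_I_mul, Complex.ofReal_div, Complex.ofReal_sub,
    Complex.ofReal_mul, Complex.ofReal_ofNat]
  field_simp
  ring

lemma norm_Kker_le {δ : ℝ} (hδ : 0 ≤ δ) {z : ℂ} (hz : δ + 1 ≤ |z.im|) :
    ‖Kker δ z‖ ≤ 4 / Real.pi * Real.exp (-2 * (|z.im| - δ)) := by
  wlog him : 0 ≤ z.im generalizing z
  · simpa [Kker_neg] using this (z := -z) (by simpa using hz) (by simp; linarith)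
  rw [abs_of_nonneg him] at hz ⊢
  have h₁ := Complex.norm_cot_add_I_le (z := z - Complex.I * δ) (by simp; linarith)
  have h₂ := Complex.norm_cot_add_I_le (z := z + Complex.I * δ) (by simp; linarith)
  simp only [Complex.sub_im, Complex.add_im, Complex.mul_im, Complex.I_re, Complex.I_im,
    Complex.ofReal_re, Complex.ofReal_im, zero_mul, one_mul, zero_add] at h₁ h₂
  have hexp : Real.exp (-2 * (z.im + δ)) ≤ Real.exp (-2 * (z.im - δ)) :=
    Real.exp_le_exp.mpr (by linarith)
  have hπ := Real.pi_pos
  calc ‖Kker δ z‖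
      = ‖(Complex.cot (z - Complex.I * δ) + Complex.I)
          - (Complex.cot (z + Complex.I * δ) + Complex.I)‖ / (2 * Real.pi) := by
        rw [Kker, add_sub_add_right_eq_sub, norm_mul, norm_div, norm_one, norm_mul, norm_mul,
          Complex.norm_I, Complex.norm_real, Real.norm_of_nonneg hπ.le]
        norm_num
        ring
    _ ≤ (4 * Real.exp (-2 * (z.im - δ)) + 4 * Real.exp (-2 * (z.im + δ))) / (2 * Real.pi) := by
        gcongr
        exact (norm_sub_le _ _).trans (add_le_add h₁ h₂)
    _ ≤ 8 * Real.exp (-2 * (z.im - δ)) / (2 * Real.pi) := by gcongr; linarith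
    _ = 4 / Real.pi * Real.exp (-2 * (z.im - δ)) := by field_simp; ring

lemma tendsto_integral_Kker_horizontal {δ : ℝ} (hδ : 0 ≤ δ) (a b : ℝ) :
    Tendsto (fun v : ℝ => ∫ s in a..b, Kker δ ((s : ℂ) + Complex.I * (v : ℂ)))
      (cocompact ℝ) (𝓝 0) := by
  have hbound : Tendsto (fun v : ℝ => 4 / Real.pi * Real.exp (-2 * (|v| - δ)) * |b - a|)
      (cocompact ℝ) (𝓝 0) := by
    have hlin : Tendsto (fun v : ℝ => -2 * (|v| - δ)) (cocompact ℝ) atBot :=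
      (tendsto_atTop_add_const_right _ (-δ) tendsto_norm_cocompact_atTop).const_mul_atTop_of_neg
        (by norm_num)
    simpa using ((Real.tendsto_exp_atBot.comp hlin).const_mul (4 / Real.pi)).mul_const |b - a|
  refine squeeze_zero_norm' ?_ hbound
  filter_upwards [tendsto_norm_cocompact_atTop.eventually_ge_atTop (δ + 1)] with v hv
  refine intervalIntegral.norm_integral_le_of_norm_le_const fun s _ => ?_
  simpa using norm_Kker_le hδ (z := s + Complex.I * v) (by simpa using hv)

lemma integral_tanh_add_sub_tanh_sub (δ v : ℝ) :
    ∫ t in (0 : ℝ)..v, (Real.tanh (t + δ) - Real.tanh (t - δ))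
      = Real.log (Real.cosh (v + δ)) - Real.log (Real.cosh (v - δ)) := by
  rw [intervalIntegral.integral_eq_sub_of_hasDerivAt
    (f := fun t => Real.log (Real.cosh (t + δ)) - Real.log (Real.cosh (t - δ)))
    (fun t _ => ((Real.hasDerivAt_log_cosh _).comp_add_const t δ).sub
      ((Real.hasDerivAt_log_cosh _).comp_sub_const t δ))
    (((Real.continuous_tanh.comp (continuous_add_const δ)).sub
      (Real.continuous_tanh.comp (continuous_sub_right δ))).intervalIntegrable _ _)]
  simp [Real.cosh_neg]

lemma tendsto_log_cosh_add_sub_log_cosh_sub_atTop (δ : ℝ) :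
    Tendsto (fun v => Real.log (Real.cosh (v + δ)) - Real.log (Real.cosh (v - δ)))
      atTop (𝓝 (2 * δ)) := by
  have h := ((Real.tendsto_log_cosh_sub_self.comp (tendsto_atTop_add_const_right _ δ tendsto_id)).sub
    (Real.tendsto_log_cosh_sub_self.comp
      (tendsto_atTop_add_const_right _ (-δ) tendsto_id))).add_const (2 * δ)
  rw [sub_self, zero_add] at h
  exact h.congr fun v => by simp only [Function.comp, id, ← sub_eq_add_neg]; ring

lemma tendsto_log_cosh_add_sub_log_cosh_sub_atBot (δ : ℝ) :
    Tendsto (fun v => Real.log (Real.cosh (v + δ)) - Real.log (Real.cosh (v - δ)))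
      atBot (𝓝 (-(2 * δ))) := by
  refine ((tendsto_log_cosh_add_sub_log_cosh_sub_atTop δ).comp tendsto_neg_atBot_atTop).neg.congr
    fun v => ?_
  rw [Function.comp_apply, show -v + δ = -(v - δ) by ring, show -v - δ = -(v + δ) by ring,
    Real.cosh_neg, Real.cosh_neg, neg_sub]

lemma thetaFn_add_I_mul (δ u v : ℝ) :
    thetaFn δ ((u : ℂ) + Complex.I * (v : ℂ))
      = -((Real.log (Real.cosh (v + δ)) - Real.log (Real.cosh (v - δ)) : ℝ) : ℂ)
        + 2 * Real.pi * Complex.I *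
          ∫ s in (-(Real.pi / 2) : ℝ)..u, Kker δ ((s : ℂ) + Complex.I * (v : ℂ)) := by
  have hπ : (Real.pi : ℂ) ≠ 0 := Complex.ofReal_ne_zero.mpr Real.pi_ne_zero
  simp only [thetaFn, Complex.add_re, Complex.add_im, Complex.ofReal_re, Complex.ofReal_im,
    Complex.mul_re, Complex.mul_im, Complex.I_re, Complex.I_im, zero_mul, one_mul,
    sub_zero, mul_zero, zero_add, add_zero, Kker_neg_pi_div_two_add_I_mul,
    intervalIntegral.integral_ofReal, intervalIntegral.integral_div,
    integral_tanh_add_sub_tanh_sub]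
  rw [Complex.ofReal_div, Complex.ofReal_mul, Complex.ofReal_ofNat, mul_add, add_left_inj]
  field_simp
  rw [Complex.I_sq, neg_one_mul]

/-- Asymptotics of `θ`: `θ(u + iv|δ) → ∓2δ` as `v → ±∞`. -/
theorem theta_asymptotics (δ : ℝ) (hδ : 0 < δ) (u : ℝ) :
    Filter.Tendsto (fun v : ℝ => thetaFn δ ((u : ℂ) + Complex.I * (v : ℂ)))
      Filter.atTop (nhds ((-(2 * δ) : ℝ) : ℂ)) ∧
    Filter.Tendsto (fun v : ℝ => thetaFn δ ((u : ℂ) + Complex.I * (v : ℂ)))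
      Filter.atBot (nhds (((2 * δ) : ℝ) : ℂ)) := by
  have hH := (tendsto_integral_Kker_horizontal hδ.le (-(Real.pi / 2)) u).const_mul
    (2 * Real.pi * Complex.I)
  simp only [thetaFn_add_I_mul]
  constructor
  · convert ((Complex.continuous_ofReal.tendsto _).comp
      (tendsto_log_cosh_add_sub_log_cosh_sub_atTop δ)).neg.add (hH.mono_left atTop_le_cocompact)
      using 2 <;> simp
  · convert ((Complex.continuous_ofReal.tendsto _).comp
      (tendsto_log_cosh_add_sub_log_cosh_sub_atBot δ)).neg.add (hH.mono_left atBot_le_cocompact)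
      using 2 <;> simp
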